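/- For all X, Y ∈ VPM°(n), the hat embedding X ↦ (X, I−X) is √2-co-Lipschitz from the Hilbert VPM distance to the product affine-invariant Riemannian distance: d_H(X, Y) ≤ √2 · sqrt( d_AIRM(X, Y)² + d_AIRM(I−X, I−Y)² ). -/

import Mathlib

open Matrix

/-- The open variance-precision bicone VPM°(n): symmetric matrices `X` with
`X` and `I - X` positive definite. -/
def VPM (n : ℕ) : Set (Matrix (Fin n) (Fin n) ℝ) :=
  {X | X.PosDef ∧ (1 - X).PosDef}

/-- Largest (real) eigenvalue of a matrix, as the supremum of its real spectrum. -/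
noncomputable def lmax {n : ℕ} (S : Matrix (Fin n) (Fin n) ℝ) : ℝ := sSup (spectrum ℝ S)

/-- Smallest (real) eigenvalue of a matrix, as the infimum of its real spectrum. -/
noncomputable def lmin {n : ℕ} (S : Matrix (Fin n) (Fin n) ℝ) : ℝ := sInf (spectrum ℝ S)

/-- Hilbert VPM distance. -/
noncomputable def dH {n : ℕ} (J₁ J₂ : Matrix (Fin n) (Fin n) ℝ) : ℝ :=
  Real.log (max (lmax (J₂⁻¹ * J₁)) (lmax ((1 - J₂)⁻¹ * (1 - J₁))) /
            min (lmin (J₂⁻¹ * J₁)) (lmin ((1 - J₂)⁻¹ * (1 - J₁))))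

lemma isHermitian_conj {n : ℕ} {B P : Matrix (Fin n) (Fin n) ℝ}
    (hB : B.IsHermitian) (hP : P.IsHermitian) : (B * P * B).IsHermitian := by
  have h := Matrix.isHermitian_mul_mul_conjTranspose B hP
  rwa [hB] at h

/-- The positive semidefinite square root of a positive semidefinite matrix, as defined
in the older Mathlib (`Matrix.PosSemidef.sqrt`). -/
noncomputable def psdSqrt {n : ℕ} {A : Matrix (Fin n) (Fin n) ℝ} (hA : A.PosSemidef) :
    Matrix (Fin n) (Fin n) ℝ :=
  hA.1.eigenvectorUnitary.1 * diagonal ((↑) ∘ Real.sqrt ∘ hA.1.eigenvalues) *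
    (star hA.1.eigenvectorUnitary : Matrix (Fin n) (Fin n) ℝ)

lemma psdSqrt_isHermitian {n : ℕ} {A : Matrix (Fin n) (Fin n) ℝ} (hA : A.PosSemidef) :
    (psdSqrt hA).IsHermitian := by
  unfold psdSqrt
  rw [Matrix.star_eq_conjTranspose]
  exact Matrix.isHermitian_mul_mul_conjTranspose _ (Matrix.isHermitian_diagonal _)

/-- Affine-invariant Riemannian distance on PD(n):
`d_AIRM(P,Q) = sqrt(Σ_i log² λ_i(Q^{−1/2} P Q^{−1/2}))`, the eigenvalues taken
with multiplicity. -/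
noncomputable def dAIRM {n : ℕ} {P Q : Matrix (Fin n) (Fin n) ℝ}
    (hP : P.PosDef) (hQ : Q.PosDef) : ℝ :=
  Real.sqrt (∑ i, Real.log
    ((isHermitian_conj (psdSqrt_isHermitian hQ.posSemidef).inv
        hP.isHermitian).eigenvalues i) ^ 2)

/- ------------------- auxiliary lemmas ------------------- -/

lemma psdSqrt_mul_self {n : ℕ} {A : Matrix (Fin n) (Fin n) ℝ} (hA : A.PosSemidef) :
    psdSqrt hA * psdSqrt hA = A := by
  have hU : (star hA.1.eigenvectorUnitary : Matrix (Fin n) (Fin n) ℝ) *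
      hA.1.eigenvectorUnitary.1 = 1 := by simp
  unfold psdSqrt
  conv_rhs => rw [hA.1.spectral_theorem, Unitary.conjStarAlgAut_apply]
  calc _ = hA.1.eigenvectorUnitary.1 * (diagonal ((↑) ∘ Real.sqrt ∘ hA.1.eigenvalues) *
        ((star hA.1.eigenvectorUnitary : Matrix (Fin n) (Fin n) ℝ) *
      hA.1.eigenvectorUnitary.1) * diagonal ((↑) ∘ Real.sqrt ∘ hA.1.eigenvalues)) *
        (star hA.1.eigenvectorUnitary : Matrix (Fin n) (Fin n) ℝ) := by
        simp only [mul_assoc]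
    _ = _ := by
        rw [hU, mul_one, diagonal_mul_diagonal]
        congr 3
        funext i
        simp [Real.mul_self_sqrt (hA.eigenvalues_nonneg i)]

lemma add_le_sqrt_two_mul (x y : ℝ) : x + y ≤ Real.sqrt 2 * Real.sqrt (x ^ 2 + y ^ 2) := by
  have h1 : x + y ≤ |x| + |y| := add_le_add (le_abs_self x) (le_abs_self y)
  refine h1.trans ?_
  rw [← Real.sqrt_mul (by norm_num : (0:ℝ) ≤ 2)]
  rw [Real.le_sqrt (by positivity) (by positivity)]
  nlinarith [sq_abs x, sq_abs y, sq_nonneg (|x| - |y|)]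

lemma posDef_conj {n : ℕ} {B P : Matrix (Fin n) (Fin n) ℝ}
    (hP : P.PosDef) (hB : B.IsHermitian) (hBu : IsUnit B) : (B * P * B).PosDef := by
  have h : B * P * B = Bᴴ * P * B := by rw [hB]
  rw [h]
  have hinj : Function.Injective B.mulVec := Matrix.mulVec_injective_iff_isUnit.mpr hBu
  exact hP.conjTranspose_mul_mul_same hinj

lemma sqrt_det_ne_zero {n : ℕ} {Q : Matrix (Fin n) (Fin n) ℝ} (hQ : Q.PosDef) :
    IsUnit (psdSqrt hQ.posSemidef).det := by
  have h : (psdSqrt hQ.posSemidef).det * (psdSqrt hQ.posSemidef).det = Q.det := by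
    rw [← Matrix.det_mul, psdSqrt_mul_self hQ.posSemidef]
  have hd := hQ.det_pos
  have : (psdSqrt hQ.posSemidef).det ≠ 0 := fun hc => by rw [hc, mul_zero] at h; linarith
  exact this.isUnit

/-- The spectrum of `Q⁻¹ * P` coincides with that of `(√Q)⁻¹ * P * (√Q)⁻¹`. -/
lemma spectrum_inv_mul {n : ℕ} {P Q : Matrix (Fin n) (Fin n) ℝ}
    (hP : P.PosDef) (hQ : Q.PosDef) :
    spectrum ℝ (Q⁻¹ * P) =
      spectrum ℝ ((psdSqrt hQ.posSemidef)⁻¹ * P * (psdSqrt hQ.posSemidef)⁻¹) := by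
  set S := psdSqrt hQ.posSemidef with hSdef
  have hdet : IsUnit S.det := sqrt_det_ne_zero hQ
  have hSu : IsUnit S := (Matrix.isUnit_iff_isUnit_det S).mpr hdet
  have key : (hSu.unit : Matrix (Fin n) (Fin n) ℝ) * (Q⁻¹ * P) * (hSu.unit⁻¹ : _) =
      S⁻¹ * P * S⁻¹ := by
    rw [Matrix.coe_units_inv, hSu.unit_spec]
    rw [← psdSqrt_mul_self hQ.posSemidef, Matrix.mul_inv_rev, ← hSdef]
    simp only [← mul_assoc]
    rw [Matrix.mul_nonsing_inv _ hdet, one_mul]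
  rw [← key, spectrum.units_conjugate]

/-- Spectrum description of `Q⁻¹ * P` via the Hermitian eigenvalues from `dAIRM`. -/
lemma spectrum_eq_range {n : ℕ} {P Q : Matrix (Fin n) (Fin n) ℝ}
    (hP : P.PosDef) (hQ : Q.PosDef) :
    spectrum ℝ (Q⁻¹ * P) = Set.range
      (isHermitian_conj (psdSqrt_isHermitian hQ.posSemidef).inv
        hP.isHermitian).eigenvalues := by
  rw [spectrum_inv_mul hP hQ]
  exact Matrix.IsHermitian.spectrum_real_eq_range_eigenvalues _

lemma eig_pos {n : ℕ} {P Q : Matrix (Fin n) (Fin n) ℝ}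
    (hP : P.PosDef) (hQ : Q.PosDef) (i : Fin n) :
    0 < (isHermitian_conj (psdSqrt_isHermitian hQ.posSemidef).inv
        hP.isHermitian).eigenvalues i := by
  have hdet : IsUnit (psdSqrt hQ.posSemidef).det := sqrt_det_ne_zero hQ
  have hSu : IsUnit (psdSqrt hQ.posSemidef) := (Matrix.isUnit_iff_isUnit_det _).mpr hdet
  have hC : ((psdSqrt hQ.posSemidef)⁻¹ * P * (psdSqrt hQ.posSemidef)⁻¹).PosDef :=
    posDef_conj hP (psdSqrt_isHermitian hQ.posSemidef).inv
      ((Matrix.isUnit_nonsing_inv_iff).mpr hSu)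
  exact hC.eigenvalues_pos i

lemma eig_log_le {n : ℕ} {P Q : Matrix (Fin n) (Fin n) ℝ}
    (hP : P.PosDef) (hQ : Q.PosDef) (i : Fin n) :
    |Real.log ((isHermitian_conj (psdSqrt_isHermitian hQ.posSemidef).inv
        hP.isHermitian).eigenvalues i)| ≤ dAIRM hP hQ := by
  unfold dAIRM
  refine Real.abs_le_sqrt ?_
  exact Finset.single_le_sum
    (f := fun j => Real.log
      ((isHermitian_conj (psdSqrt_isHermitian hQ.posSemidef).inv
        hP.isHermitian).eigenvalues j) ^ 2)
    (fun j _ => sq_nonneg _) (Finset.mem_univ i)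

lemma dAIRM_nonneg {n : ℕ} {P Q : Matrix (Fin n) (Fin n) ℝ}
    (hP : P.PosDef) (hQ : Q.PosDef) : 0 ≤ dAIRM hP hQ := Real.sqrt_nonneg _

/-- every spectrum element of `Q⁻¹ P` is positive with `|log| ≤ dAIRM`. -/
lemma spec_facts {n : ℕ} {P Q : Matrix (Fin n) (Fin n) ℝ}
    (hP : P.PosDef) (hQ : Q.PosDef) {x : ℝ} (hx : x ∈ spectrum ℝ (Q⁻¹ * P)) :
    0 < x ∧ |Real.log x| ≤ dAIRM hP hQ := by
  rw [spectrum_eq_range hP hQ] at hx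
  obtain ⟨i, rfl⟩ := hx
  exact ⟨eig_pos hP hQ i, eig_log_le hP hQ i⟩

lemma lmax_mem {n : ℕ} (hn : 0 < n) {P Q : Matrix (Fin n) (Fin n) ℝ}
    (hP : P.PosDef) (hQ : Q.PosDef) :
    lmax (Q⁻¹ * P) ∈ spectrum ℝ (Q⁻¹ * P) := by
  have : Nonempty (Fin n) := ⟨⟨0, hn⟩⟩
  rw [lmax, spectrum_eq_range hP hQ]
  exact Set.Nonempty.csSup_mem (Set.range_nonempty _) (Set.finite_range _)

lemma lmin_mem {n : ℕ} (hn : 0 < n) {P Q : Matrix (Fin n) (Fin n) ℝ}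
    (hP : P.PosDef) (hQ : Q.PosDef) :
    lmin (Q⁻¹ * P) ∈ spectrum ℝ (Q⁻¹ * P) := by
  have : Nonempty (Fin n) := ⟨⟨0, hn⟩⟩
  rw [lmin, spectrum_eq_range hP hQ]
  exact Set.Nonempty.csInf_mem (Set.range_nonempty _) (Set.finite_range _)

/-- Same-matrix bound : `log lmax − log lmin ≤ √2 · dAIRM`. -/
lemma log_spread_le {n : ℕ} (hn : 0 < n) {P Q : Matrix (Fin n) (Fin n) ℝ}
    (hP : P.PosDef) (hQ : Q.PosDef) :
    Real.log (lmax (Q⁻¹ * P)) - Real.log (lmin (Q⁻¹ * P)) ≤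
      Real.sqrt 2 * dAIRM hP hQ := by
  have hmax := lmax_mem hn hP hQ
  have hmin := lmin_mem hn hP hQ
  rw [spectrum_eq_range hP hQ] at hmax hmin
  obtain ⟨i, hi⟩ := hmax
  obtain ⟨j, hj⟩ := hmin
  rcases eq_or_ne i j with rfl | hij
  · rw [← hi, ← hj, sub_self]
    exact mul_nonneg (Real.sqrt_nonneg 2) (dAIRM_nonneg hP hQ)
  · set f := (isHermitian_conj (psdSqrt_isHermitian hQ.posSemidef).inv
        hP.isHermitian).eigenvalues
    have hsum : Real.log (f i) ^ 2 + Real.log (f j) ^ 2 ≤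
        ∑ k, Real.log (f k) ^ 2 := by
      have := Finset.sum_le_sum_of_subset_of_nonneg
        (Finset.subset_univ ({i, j} : Finset (Fin n)))
        (fun k _ _ => sq_nonneg (Real.log (f k)))
      rwa [Finset.sum_pair hij] at this
    have h2 : Real.sqrt (Real.log (f i) ^ 2 + Real.log (f j) ^ 2) ≤ dAIRM hP hQ := by
      unfold dAIRM
      exact Real.sqrt_le_sqrt hsum
    rw [← hi, ← hj, sub_eq_add_neg]
    calc Real.log (f i) + -Real.log (f j)
        ≤ Real.sqrt 2 * Real.sqrt (Real.log (f i) ^ 2 + (-Real.log (f j)) ^ 2) :=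
          add_le_sqrt_two_mul _ _
      _ = Real.sqrt 2 * Real.sqrt (Real.log (f i) ^ 2 + Real.log (f j) ^ 2) := by
          rw [neg_sq]
      _ ≤ Real.sqrt 2 * dAIRM hP hQ :=
          mul_le_mul_of_nonneg_left h2 (Real.sqrt_nonneg 2)

/-- The hat embedding `X ↦ (X, I−X)` is `√2`-co-Lipschitz from the Hilbert VPM
distance to the product affine-invariant Riemannian distance:
`d_H(X,Y) ≤ √2 · sqrt(d_AIRM(X,Y)² + d_AIRM(I−X,I−Y)²)`. -/
theorem hat_embedding_coLipschitz {n : ℕ} (X Y : Matrix (Fin n) (Fin n) ℝ)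
    (hX : X ∈ VPM n) (hY : Y ∈ VPM n) :
    dH X Y ≤ Real.sqrt 2 *
      Real.sqrt ((dAIRM hX.1 hY.1) ^ 2 + (dAIRM hX.2 hY.2) ^ 2) := by
  have hd1 : (0:ℝ) ≤ dAIRM hX.1 hY.1 := dAIRM_nonneg _ _
  have hd2 : (0:ℝ) ≤ dAIRM hX.2 hY.2 := dAIRM_nonneg _ _
  have hd1le : dAIRM hX.1 hY.1 ≤ Real.sqrt (dAIRM hX.1 hY.1 ^ 2 + dAIRM hX.2 hY.2 ^ 2) := by
    nth_rewrite 1 [show dAIRM hX.1 hY.1 = Real.sqrt (dAIRM hX.1 hY.1 ^ 2) from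
      (Real.sqrt_sq hd1).symm]
    exact Real.sqrt_le_sqrt (by nlinarith)
  have hd2le : dAIRM hX.2 hY.2 ≤ Real.sqrt (dAIRM hX.1 hY.1 ^ 2 + dAIRM hX.2 hY.2 ^ 2) := by
    nth_rewrite 1 [show dAIRM hX.2 hY.2 = Real.sqrt (dAIRM hX.2 hY.2 ^ 2) from
      (Real.sqrt_sq hd2).symm]
    exact Real.sqrt_le_sqrt (by nlinarith)
  rcases Nat.eq_zero_or_pos n with hn | hn
  · subst hn
    have e1 : spectrum ℝ (Y⁻¹ * X) = ∅ := by
      rw [spectrum_eq_range hX.1 hY.1]; exact Set.range_eq_empty _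
    have e2 : spectrum ℝ ((1 - Y)⁻¹ * (1 - X)) = ∅ := by
      rw [spectrum_eq_range hX.2 hY.2]; exact Set.range_eq_empty _
    unfold dH lmax lmin
    rw [e1, e2, Real.sSup_empty, Real.sInf_empty]
    simp only [max_self, min_self, zero_div, Real.log_zero]
    exact mul_nonneg (Real.sqrt_nonneg 2) (Real.sqrt_nonneg _)
  · have hAmax := spec_facts hX.1 hY.1 (lmax_mem hn hX.1 hY.1)
    have hAmin := spec_facts hX.1 hY.1 (lmin_mem hn hX.1 hY.1)
    have hBmax := spec_facts hX.2 hY.2 (lmax_mem hn hX.2 hY.2)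
    have hBmin := spec_facts hX.2 hY.2 (lmin_mem hn hX.2 hY.2)
    unfold dH
    have hM : 0 < max (lmax (Y⁻¹ * X)) (lmax ((1 - Y)⁻¹ * (1 - X))) :=
      lt_max_of_lt_left hAmax.1
    have hm : 0 < min (lmin (Y⁻¹ * X)) (lmin ((1 - Y)⁻¹ * (1 - X))) :=
      lt_min hAmin.1 hBmin.1
    rw [Real.log_div hM.ne' hm.ne']
    have h1max : Real.log (lmax (Y⁻¹ * X)) ≤ dAIRM hX.1 hY.1 :=
      (le_abs_self _).trans hAmax.2
    have h2max : Real.log (lmax ((1 - Y)⁻¹ * (1 - X))) ≤ dAIRM hX.2 hY.2 :=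
      (le_abs_self _).trans hBmax.2
    have h1min : -Real.log (lmin (Y⁻¹ * X)) ≤ dAIRM hX.1 hY.1 :=
      (neg_le_abs _).trans hAmin.2
    have h2min : -Real.log (lmin ((1 - Y)⁻¹ * (1 - X))) ≤ dAIRM hX.2 hY.2 :=
      (neg_le_abs _).trans hBmin.2
    rcases max_choice (lmax (Y⁻¹ * X)) (lmax ((1 - Y)⁻¹ * (1 - X))) with hMc | hMc <;>
      rcases min_choice (lmin (Y⁻¹ * X)) (lmin ((1 - Y)⁻¹ * (1 - X))) with hmc | hmc <;>
        rw [hMc, hmc]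
    · exact (log_spread_le hn hX.1 hY.1).trans
        (mul_le_mul_of_nonneg_left hd1le (Real.sqrt_nonneg 2))
    · calc Real.log (lmax (Y⁻¹ * X)) - Real.log (lmin ((1 - Y)⁻¹ * (1 - X)))
          ≤ dAIRM hX.1 hY.1 + dAIRM hX.2 hY.2 := by linarith
        _ ≤ Real.sqrt 2 * Real.sqrt (dAIRM hX.1 hY.1 ^ 2 + dAIRM hX.2 hY.2 ^ 2) :=
          add_le_sqrt_two_mul _ _
    · calc Real.log (lmax ((1 - Y)⁻¹ * (1 - X))) - Real.log (lmin (Y⁻¹ * X))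
          ≤ dAIRM hX.1 hY.1 + dAIRM hX.2 hY.2 := by linarith
        _ ≤ Real.sqrt 2 * Real.sqrt (dAIRM hX.1 hY.1 ^ 2 + dAIRM hX.2 hY.2 ^ 2) :=
          add_le_sqrt_two_mul _ _
    · exact (log_spread_le hn hX.2 hY.2).trans
        (mul_le_mul_of_nonneg_left hd2le (Real.sqrt_nonneg 2))
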